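/- (Linear convergence of one full iteration of Oblique Subspace Pursuit.) Let Ψ, Ψ̃ ∈ K^{m×n}, let x* ∈ K^n be s-sparse with support J*, let z ∈ K^m and y = Ψx* + z. Assume θ := θ_{3s}(Ψ̃*Ψ) < 1 and set δ := δ_s(Ψ), δ̃ := δ_{2s}(Ψ̃). Let J_t ⊆ {1,…,n} with |J_t| = s and let x_t be the vector supported on J_t with Ψ̃_{J_t}*(y − Ψx_t) = 0. Perform one ObSP iteration: let w = Ψ̃*(y − Ψx_t); let J̄ be a set of s indices with min_{j∈J̄}|w_j| ≥ max_{j∉J̄}|w_j|; set J̃ = J_t ∪ J̄; let x̃ be the vector supported on J̃ with Ψ̃_{J̃}*(y − Ψx̃) = 0; let J_{t+1} ⊆ J̃ with |J_{t+1}| = s and min_{j∈J_{t+1}}|x̃_j| ≥ max_{j∈J̃\J_{t+1}}|x̃_j|; and let x_{t+1} be the vector supported on J_{t+1} with Ψ̃_{J_{t+1}}*(y − Ψx_{t+1}) = 0. Then ‖x_{t+1} − x*‖₂ ≤ ρ·‖x_t − x*‖₂ + τ·‖z‖₂, where ρ = ρ₁ρ₂ρ₃ and τ = τ₁ + ρ₁τ₂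 + ρ₁ρ₂τ₃, with ρ₁ = 1/√(1−θ²), τ₁ = √(1+δ̃)/(1−θ), ρ₂ = (1+θ)/(1−θ), τ₂ = 2√(1+δ̃)/(1−θ), ρ₃ = max( θ/(1−θ), 2θ(1−θ)/(1+2θ+2θ²) ), τ₃ = max( 1/(1−θ), 2(1−θ)/(1+2θ+2θ²) )·( 2√(1+δ)(1+δ̃)/(1−θ) ). Moreover, ρ < 1 whenever θ_{3s}(Ψ̃*Ψ) < 0.325. -/

import Mathlib

/-!
Write `T = Ψ̃*Ψ` and `η = Ψ̃*z`. Each oblique least-squares step `x'` on an index set `J` makes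
`T (x* - x') + η` vanish on `J`, and `T` acts as the identity up to `θ` on `3s`-sparse vectors,
while `‖Π_V η‖ ≤ √(1+δ̃)‖z‖ =: N` for `|V| ≤ 2s`. This gives three error estimates:
* final step: `‖x_{t+1} - x*‖² ≤ (θ‖x_{t+1} - x*‖ + N)² + ‖Π_{J_{t+1}ᶜ} x*‖²`;
* pruning: `‖Π_{J_{t+1}ᶜ} x*‖² ≤ ‖Π_{J̃ᶜ} x*‖² + 4‖Π_{J̃}(x* - x̃)‖²`, where the step on `J̃`
  gives `(1 - θ)‖Π_{J̃}(x* - x̃)‖ ≤ θ‖Π_{J̃ᶜ} x*‖ + N`;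
* identification: `‖Π_{J̃ᶜ} x*‖ ≤ √2 (θ‖x_t - x*‖ + N)`, because every entry of `x*` missed by
  `J̃` is outweighed in `w` by an entry of `J̄` outside `supp x* ∪ J_t`.
Chaining these scalar inequalities produces `ρ` and `τ`.
-/

open scoped BigOperators
open Matrix MeasureTheory

noncomputable section

namespace ObliquePursuit

variable {𝕜 : Type*} [RCLike 𝕜]

/-- The Euclidean (`ℓ²`) norm of a finitely indexed vector. -/
def l2 {ι : Type*} [Fintype ι] (x : ι → 𝕜) : ℝ :=
  Real.sqrt (∑ i, ‖x i‖ ^ 2)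

/-- The spectral (`ℓ² → ℓ²` operator) norm of a matrix. -/
def specNorm {ι κ : Type*} [Fintype ι] [Fintype κ] [DecidableEq κ]
    (M : Matrix ι κ 𝕜) : ℝ :=
  ‖LinearMap.toContinuousLinearMap (Matrix.toEuclideanLin M)‖

/-- `x` is `s`-sparse: it has at most `s` nonzero entries. -/
def Sparse {ι : Type*} (s : ℕ) (x : ι → 𝕜) : Prop :=
  ∃ J : Finset ι, J.card ≤ s ∧ ∀ i, x i ≠ 0 → i ∈ J

/-- The `s`-restricted biorthogonality constant `θ_s(M)`: the smallest `δ ≥ 0` such that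
`|⟨y, Mx⟩ − ⟨y, x⟩| ≤ δ‖x‖₂‖y‖₂` for all `x, y` supported on a common index set of
cardinality at most `s`. -/
def theta {ι : Type*} [Fintype ι] (s : ℕ) (M : Matrix ι ι 𝕜) : ℝ :=
  sInf {δ : ℝ | 0 ≤ δ ∧ ∀ J : Finset ι, J.card ≤ s →
    ∀ x y : ι → 𝕜, (∀ i, x i ≠ 0 → i ∈ J) → (∀ i, y i ≠ 0 → i ∈ J) →
      ‖star y ⬝ᵥ M.mulVec x - star y ⬝ᵥ x‖ ≤ δ * l2 x * l2 y}

/-- The `s`-restricted isometry constant `δ_s(Ψ)`. -/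
def ric {ι κ : Type*} [Fintype ι] [Fintype κ] (s : ℕ) (Ψ : Matrix ι κ 𝕜) : ℝ :=
  sInf {δ : ℝ | 0 ≤ δ ∧ ∀ x : κ → 𝕜, Sparse s x →
    (1 - δ) * l2 x ^ 2 ≤ l2 (Ψ.mulVec x) ^ 2 ∧
      l2 (Ψ.mulVec x) ^ 2 ≤ (1 + δ) * l2 x ^ 2}

/-- Coordinate projection `Π_J`: keep the entries indexed by `J`, zero out the others. -/
def proj {ι : Type*} [DecidableEq ι] (J : Finset ι) (x : ι → 𝕜) : ι → 𝕜 :=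
  fun i => if i ∈ J then x i else 0

/-- The column submatrix `Ψ_J` of `Ψ` formed by the columns indexed by `J`. -/
def cols {ι κ : Type*} (Ψ : Matrix ι κ 𝕜) (J : Finset κ) :
    Matrix ι {j // j ∈ J} 𝕜 :=
  Ψ.submatrix id fun j => (j : κ)

/-- The `j`-th column of `Ψ`. -/
def col {ι κ : Type*} (Ψ : Matrix ι κ 𝕜) (j : κ) : ι → 𝕜 :=
  fun i => Ψ i j

/-- The complementary oblique projector `E = I − Ψ_J (Ψ̃_J^* Ψ_J)⁻¹ Ψ̃_J^*`
(equal to `I` when `J = ∅`). -/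
def obliqueE {ι κ : Type*} [Fintype ι] [DecidableEq ι] [DecidableEq κ]
    (Ψ Ψt : Matrix ι κ 𝕜) (J : Finset κ) : Matrix ι ι 𝕜 :=
  1 - cols Ψ J * ((cols Ψt J)ᴴ * cols Ψ J)⁻¹ * (cols Ψt J)ᴴ

/-- The smallest (real) eigenvalue of a matrix. -/
def lamMin {ι : Type*} [Fintype ι] (G : Matrix ι ι 𝕜) : ℝ :=
  sInf {r : ℝ | ∃ v : ι → 𝕜, v ≠ 0 ∧ G.mulVec v = (r : 𝕜) • v}

/-- The `j`-th largest singular value (1-indexed) of a matrix, characterized via the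
Eckart–Young–Mirsky theorem: `σ_j(A) = min { ‖A − B‖ : rank B < j }` where `‖·‖` is the
spectral norm. -/
def singVal {ι κ : Type*} [Fintype ι] [Fintype κ] [DecidableEq κ]
    (A : Matrix ι κ 𝕜) (j : ℕ) : ℝ :=
  sInf {r : ℝ | ∃ B : Matrix ι κ 𝕜, B.rank < j ∧ r = specNorm (A - B)}


section L2

variable {ι : Type*} [Fintype ι]

lemma l2_nonneg (x : ι → 𝕜) : 0 ≤ l2 x := Real.sqrt_nonneg _

lemma l2_sq (x : ι → 𝕜) : l2 x ^ 2 = ∑ i, ‖x i‖ ^ 2 := Real.sq_sqrt (by positivity)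

lemma l2_eq_norm_toLp (x : ι → 𝕜) : l2 x = ‖WithLp.toLp 2 x‖ := by
  rw [EuclideanSpace.norm_eq]; rfl

lemma l2_add_le (x y : ι → 𝕜) : l2 (x + y) ≤ l2 x + l2 y := by
  simpa only [l2_eq_norm_toLp, WithLp.toLp_add] using norm_add_le _ _

lemma l2_neg (x : ι → 𝕜) : l2 (-x) = l2 x := by simp [l2]

lemma l2_sub_comm (x y : ι → 𝕜) : l2 (x - y) = l2 (y - x) := by rw [← neg_sub, l2_neg]

lemma l2_sub_le (x y : ι → 𝕜) : l2 (x - y) ≤ l2 x + l2 y := by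
  simpa only [sub_eq_add_neg, l2_neg] using l2_add_le x (-y)

lemma norm_star_dotProduct_le (x y : ι → 𝕜) : ‖star x ⬝ᵥ y‖ ≤ l2 x * l2 y := by
  have h : star x ⬝ᵥ y = inner 𝕜 (WithLp.toLp 2 x) (WithLp.toLp 2 y) := by
    rw [EuclideanSpace.inner_toLp_toLp, dotProduct_comm]
  rw [h, l2_eq_norm_toLp, l2_eq_norm_toLp]
  exact norm_inner_le_norm _ _

lemma l2_mulVec_sq_le {κ : Type*} [Fintype κ] (M : Matrix κ ι 𝕜) (x : ι → 𝕜) :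
    l2 (M *ᵥ x) ^ 2 ≤ (∑ i, ∑ j, ‖M i j‖ ^ 2) * l2 x ^ 2 := by
  rw [l2_sq, l2_sq, Finset.sum_mul]
  refine Finset.sum_le_sum fun i _ => ?_
  calc ‖∑ j, M i j * x j‖ ^ 2 ≤ (∑ j, ‖M i j‖ * ‖x j‖) ^ 2 := by
        gcongr
        exact (norm_sum_le _ _).trans_eq (by simp only [norm_mul])
    _ ≤ (∑ j, ‖M i j‖ ^ 2) * ∑ j, ‖x j‖ ^ 2 := Finset.sum_mul_sq_le_sq_mul_sq _ _ _

lemma l2_mulVec_le {κ : Type*} [Fintype κ] (M : Matrix κ ι 𝕜) (x : ι → 𝕜) :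
    l2 (M *ᵥ x) ≤ Real.sqrt (∑ i, ∑ j, ‖M i j‖ ^ 2) * l2 x := by
  rw [← Real.sqrt_sq (l2_nonneg (M *ᵥ x)), ← Real.sqrt_sq (l2_nonneg x), ← Real.sqrt_mul
    (by positivity)]
  exact Real.sqrt_le_sqrt (l2_mulVec_sq_le M x)

end L2

section Proj

variable {ι : Type*} [DecidableEq ι]

@[simp]
lemma proj_apply (J : Finset ι) (x : ι → 𝕜) (i : ι) :
    proj J x i = if i ∈ J then x i else 0 := rfl

lemma proj_add (J : Finset ι) (x y : ι → 𝕜) : proj J (x + y) = proj J x + proj J y := by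
  funext i; by_cases hi : i ∈ J <;> simp [hi]

lemma proj_sub (J : Finset ι) (x y : ι → 𝕜) : proj J (x - y) = proj J x - proj J y := by
  funext i; by_cases hi : i ∈ J <;> simp [hi]

lemma proj_support {J : Finset ι} (x : ι → 𝕜) : ∀ i, proj J x i ≠ 0 → i ∈ J := by
  intro i; by_cases hi : i ∈ J <;> simp [hi]

lemma proj_support_of_support {J K : Finset ι} {x : ι → 𝕜} (hx : ∀ i, x i ≠ 0 → i ∈ J) :
    ∀ i, proj K x i ≠ 0 → i ∈ J := fun i hi =>
  hx i fun h => hi (by by_cases hiK : i ∈ K <;> simp [hiK, h])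

lemma support_sub_subset {J K : Finset ι} {x y : ι → 𝕜} (hx : ∀ i, x i ≠ 0 → i ∈ J)
    (hy : ∀ i, y i ≠ 0 → i ∈ K) : ∀ i, (x - y) i ≠ 0 → i ∈ J ∪ K := fun i h => by
  by_contra hc
  simp only [Finset.mem_union, not_or] at hc
  exact h (by simp [not_not.1 (mt (hx i) hc.1), not_not.1 (mt (hy i) hc.2)])

lemma proj_eq_zero {J K : Finset ι} {x : ι → 𝕜} (hx : ∀ i, x i ≠ 0 → i ∈ J)
    (hKJ : Disjoint K J) : proj K x = 0 := by
  funext i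
  by_cases hi : i ∈ K
  · simpa [hi] using mt (hx i) (Finset.disjoint_left.1 hKJ hi)
  · simp [hi]

lemma proj_eq_proj_of_support {J K K' : Finset ι} {x : ι → 𝕜} (hx : ∀ i, x i ≠ 0 → i ∈ J)
    (h : ∀ i ∈ J, i ∈ K ↔ i ∈ K') : proj K x = proj K' x := by
  funext i
  by_cases hxi : x i = 0
  · simp [hxi]
  · simp [h i (hx i hxi)]

lemma proj_sub_eq_of_disjoint {J K : Finset ι} {x x' : ι → 𝕜} (hx' : ∀ i, x' i ≠ 0 → i ∈ J)
    (hKJ : Disjoint K J) : proj K (x - x') = proj K x := by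
  rw [proj_sub, proj_eq_zero hx' hKJ, sub_zero]

variable [Fintype ι]

lemma proj_add_proj_compl (J : Finset ι) (x : ι → 𝕜) : proj J x + proj Jᶜ x = x := by
  funext i; by_cases hi : i ∈ J <;> simp [hi]

lemma l2_proj_sq (J : Finset ι) (x : ι → 𝕜) : l2 (proj J x) ^ 2 = ∑ i ∈ J, ‖x i‖ ^ 2 := by
  rw [l2_sq]
  simp [apply_ite (fun a : 𝕜 => ‖a‖ ^ 2), Finset.sum_ite_mem]

lemma l2_proj_eq_sqrt (J : Finset ι) (x : ι → 𝕜) :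
    l2 (proj J x) = Real.sqrt (∑ i ∈ J, ‖x i‖ ^ 2) := by
  rw [← l2_proj_sq, Real.sqrt_sq (l2_nonneg _)]

lemma l2_proj_le_of_subset {J J' : Finset ι} (h : J ⊆ J') (x : ι → 𝕜) :
    l2 (proj J x) ≤ l2 (proj J' x) := by
  rw [l2_proj_eq_sqrt, l2_proj_eq_sqrt]
  exact Real.sqrt_le_sqrt (Finset.sum_le_sum_of_subset_of_nonneg h fun _ _ _ => by positivity)

lemma l2_sq_eq_proj_add_proj_compl (J : Finset ι) (x : ι → 𝕜) :
    l2 x ^ 2 = l2 (proj J x) ^ 2 + l2 (proj Jᶜ x) ^ 2 := by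
  rw [l2_sq, l2_proj_sq, l2_proj_sq, Finset.sum_add_sum_compl]

lemma l2_proj_union_sq {S S' : Finset ι} (h : Disjoint S S') (x : ι → 𝕜) :
    l2 (proj (S ∪ S') x) ^ 2 = l2 (proj S x) ^ 2 + l2 (proj S' x) ^ 2 := by
  rw [l2_proj_sq, l2_proj_sq, l2_proj_sq, Finset.sum_union h]

lemma star_proj_dotProduct (J : Finset ι) (x : ι → 𝕜) :
    star (proj J x) ⬝ᵥ x = ((l2 (proj J x) ^ 2 : ℝ) : 𝕜) := by
  simp [l2_proj_sq, dotProduct, apply_ite star, ite_mul, Finset.sum_ite_mem, RCLike.star_def,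
    RCLike.conj_mul]

end Proj

lemma le_sInf_mul {S : Set ℝ} (hS : S.Nonempty) {a c : ℝ} (hc : 0 ≤ c)
    (h : ∀ δ ∈ S, a ≤ δ * c) : a ≤ sInf S * c := by
  rcases hc.eq_or_lt with rfl | hc
  · obtain ⟨δ, hδ⟩ := hS
    simpa using h δ hδ
  · rw [← div_le_iff₀ hc]
    exact le_csInf hS fun δ hδ => (div_le_iff₀ hc).2 (h δ hδ)

lemma le_of_sq_le_mul {a c : ℝ} (hc : 0 ≤ c) (h : a ^ 2 ≤ c * a) : a ≤ c := by
  nlinarith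

section Theta

variable {ι : Type*} [Fintype ι]

lemma theta_nonneg (s : ℕ) (M : Matrix ι ι 𝕜) : 0 ≤ theta s M :=
  Real.sInf_nonneg fun _ hδ => hδ.1

lemma norm_sub_le_theta (s : ℕ) (M : Matrix ι ι 𝕜) {J : Finset ι} (hJ : J.card ≤ s)
    {x y : ι → 𝕜} (hx : ∀ i, x i ≠ 0 → i ∈ J) (hy : ∀ i, y i ≠ 0 → i ∈ J) :
    ‖star y ⬝ᵥ M *ᵥ x - star y ⬝ᵥ x‖ ≤ theta s M * l2 x * l2 y := by
  have hne : {δ : ℝ | 0 ≤ δ ∧ ∀ J : Finset ι, J.card ≤ s →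
      ∀ x y : ι → 𝕜, (∀ i, x i ≠ 0 → i ∈ J) → (∀ i, y i ≠ 0 → i ∈ J) →
        ‖star y ⬝ᵥ M *ᵥ x - star y ⬝ᵥ x‖ ≤ δ * l2 x * l2 y}.Nonempty := by
    refine ⟨Real.sqrt (∑ i, ∑ j, ‖M i j‖ ^ 2) + 1, by positivity, fun _ _ x y _ _ => ?_⟩
    calc ‖star y ⬝ᵥ M *ᵥ x - star y ⬝ᵥ x‖ ≤ l2 y * l2 (M *ᵥ x) + l2 y * l2 x :=
          (norm_sub_le _ _).trans (add_le_add (norm_star_dotProduct_le _ _)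
            (norm_star_dotProduct_le _ _))
      _ ≤ l2 y * (Real.sqrt (∑ i, ∑ j, ‖M i j‖ ^ 2) * l2 x) + l2 y * l2 x := by
          gcongr
          · exact l2_nonneg y
          · exact l2_mulVec_le M x
      _ = _ := by ring
  rw [mul_assoc]
  exact le_sInf_mul hne (mul_nonneg (l2_nonneg x) (l2_nonneg y))
    fun δ hδ => (hδ.2 J hJ x y hx hy).trans_eq (mul_assoc _ _ _)

variable [DecidableEq ι]

lemma l2_proj_mulVec_sub_le (s : ℕ) (M : Matrix ι ι 𝕜) {J V : Finset ι} (hJ : J.card ≤ s)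
    (hV : V ⊆ J) {u : ι → 𝕜} (hu : ∀ i, u i ≠ 0 → i ∈ J) :
    l2 (proj V (M *ᵥ u - u)) ≤ theta s M * l2 u := by
  set v := proj V (M *ᵥ u - u)
  have hv : ‖star v ⬝ᵥ M *ᵥ u - star v ⬝ᵥ u‖ = l2 v ^ 2 := by
    rw [← dotProduct_sub, star_proj_dotProduct, RCLike.norm_ofReal, abs_of_nonneg (by positivity)]
  refine le_of_sq_le_mul (mul_nonneg (theta_nonneg s M) (l2_nonneg u)) ?_
  rw [← hv]
  exact norm_sub_le_theta s M hJ hu fun i hi => hV (proj_support _ i hi)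

end Theta

section RIC

variable {ι κ : Type*} [Fintype ι] [Fintype κ]

lemma ric_nonneg (s : ℕ) (Ψ : Matrix ι κ 𝕜) : 0 ≤ ric s Ψ :=
  Real.sInf_nonneg fun _ hδ => hδ.1

lemma sq_l2_mulVec_le_ric (s : ℕ) (Ψ : Matrix ι κ 𝕜) {x : κ → 𝕜} (hx : Sparse s x) :
    l2 (Ψ *ᵥ x) ^ 2 ≤ (1 + ric s Ψ) * l2 x ^ 2 := by
  have hne : {δ : ℝ | 0 ≤ δ ∧ ∀ x : κ → 𝕜, Sparse s x →
      (1 - δ) * l2 x ^ 2 ≤ l2 (Ψ *ᵥ x) ^ 2 ∧ l2 (Ψ *ᵥ x) ^ 2 ≤ (1 + δ) * l2 x ^ 2}.Nonempty := by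
    refine ⟨1 + ∑ i, ∑ j, ‖Ψ i j‖ ^ 2, by positivity, fun x _ => ⟨?_, ?_⟩⟩
    · have : 0 ≤ (∑ i, ∑ j, ‖Ψ i j‖ ^ 2) * l2 x ^ 2 := by positivity
      nlinarith [sq_nonneg (l2 (Ψ *ᵥ x))]
    · nlinarith [l2_mulVec_sq_le Ψ x, sq_nonneg (l2 x)]
  have := le_sInf_mul hne (sq_nonneg (l2 x)) (a := l2 (Ψ *ᵥ x) ^ 2 - l2 x ^ 2)
    fun δ hδ => by linarith [(hδ.2 x hx).2]
  unfold ric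
  linarith

lemma l2_mulVec_le_ric (s : ℕ) (Ψ : Matrix ι κ 𝕜) {x : κ → 𝕜} (hx : Sparse s x) :
    l2 (Ψ *ᵥ x) ≤ Real.sqrt (1 + ric s Ψ) * l2 x := by
  rw [← Real.sqrt_sq (l2_nonneg (Ψ *ᵥ x)), ← Real.sqrt_sq (l2_nonneg x), ← Real.sqrt_mul
    (by linarith [ric_nonneg s Ψ])]
  exact Real.sqrt_le_sqrt (sq_l2_mulVec_le_ric s Ψ hx)

end RIC

section Measurement

variable {ι κ : Type*} [Fintype κ]

lemma l2_proj_conjTranspose_mulVec_le [Fintype ι] [DecidableEq ι] (s : ℕ) (Ψ : Matrix κ ι 𝕜)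
    {V : Finset ι} (hV : V.card ≤ s) (z : κ → 𝕜) :
    l2 (proj V (Ψᴴ *ᵥ z)) ≤ Real.sqrt (1 + ric s Ψ) * l2 z := by
  set v := proj V (Ψᴴ *ᵥ z)
  have hv : l2 v ^ 2 = ‖star (Ψ *ᵥ v) ⬝ᵥ z‖ := by
    rw [star_mulVec, ← dotProduct_mulVec, star_proj_dotProduct, RCLike.norm_ofReal,
      abs_of_nonneg (by positivity)]
  refine le_of_sq_le_mul (mul_nonneg (Real.sqrt_nonneg _) (l2_nonneg z)) ?_
  calc l2 v ^ 2 ≤ l2 (Ψ *ᵥ v) * l2 z := hv.trans_le (norm_star_dotProduct_le _ _)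
    _ ≤ Real.sqrt (1 + ric s Ψ) * l2 v * l2 z := by
        gcongr
        · exact l2_nonneg z
        · exact l2_mulVec_le_ric s Ψ ⟨V, hV, proj_support _⟩
    _ = _ := by ring

lemma conjTranspose_mulVec_residual [Fintype ι] (Ψ Ψt : Matrix κ ι 𝕜) (x x' : ι → 𝕜) (z : κ → 𝕜) :
    Ψtᴴ *ᵥ (Ψ *ᵥ x + z - Ψ *ᵥ x') = (Ψtᴴ * Ψ) *ᵥ (x - x') + Ψtᴴ *ᵥ z := by
  simp only [mulVec_add, mulVec_sub, mulVec_mulVec]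
  abel

lemma proj_conjTranspose_mulVec_eq_zero [DecidableEq ι] {Ψ : Matrix κ ι 𝕜} {r : κ → 𝕜}
    {J : Finset ι} (h : ∀ j ∈ J, star (col Ψ j) ⬝ᵥ r = 0) : proj J (Ψᴴ *ᵥ r) = 0 := by
  funext j
  by_cases hj : j ∈ J
  · simpa [hj, mulVec, dotProduct, col] using h j hj
  · simp [hj]

lemma proj_mulVec_residual_eq_zero [Fintype ι] [DecidableEq ι] {Ψ Ψt : Matrix κ ι 𝕜}
    {x x' : ι → 𝕜} {z : κ → 𝕜} {J : Finset ι}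
    (h : ∀ j ∈ J, star (col Ψt j) ⬝ᵥ (Ψ *ᵥ x + z - Ψ *ᵥ x') = 0) :
    proj J ((Ψtᴴ * Ψ) *ᵥ (x - x') + Ψtᴴ *ᵥ z) = 0 := by
  rw [← conjTranspose_mulVec_residual]
  exact proj_conjTranspose_mulVec_eq_zero h

end Measurement

section LeastSquares

variable {ι : Type*} [Fintype ι] [DecidableEq ι] {s : ℕ} {T : Matrix ι ι 𝕜}
  {x x' η : ι → 𝕜} {Jstar J : Finset ι}

lemma proj_eq_of_proj_mulVec_add_eq_zero {u : ι → 𝕜} (h : proj J (T *ᵥ u + η) = 0) :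
    proj J u = -proj J (T *ᵥ u - u) - proj J η := by
  rw [proj_add] at h
  rw [proj_sub, eq_neg_of_add_eq_zero_left h]
  abel

lemma l2_sub_sq_le_of_orth (hx : ∀ i, x i ≠ 0 → i ∈ Jstar) (hx' : ∀ i, x' i ≠ 0 → i ∈ J)
    (hcard : (Jstar ∪ J).card ≤ s) (horth : proj J (T *ᵥ (x - x') + η) = 0) {N : ℝ}
    (hη : l2 (proj J η) ≤ N) :
    l2 (x - x') ^ 2 ≤ (theta s T * l2 (x - x') + N) ^ 2 + l2 (proj Jᶜ x) ^ 2 := by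
  have hJ : l2 (proj J (x - x')) ≤ theta s T * l2 (x - x') + N := by
    rw [proj_eq_of_proj_mulVec_add_eq_zero horth, ← l2_neg, neg_sub, sub_neg_eq_add,
      add_comm]
    exact (l2_add_le _ _).trans (add_le_add (l2_proj_mulVec_sub_le s T hcard
      Finset.subset_union_right (support_sub_subset hx hx')) hη)
  rw [l2_sq_eq_proj_add_proj_compl J, proj_sub_eq_of_disjoint hx' disjoint_compl_left]
  gcongr
  exact l2_nonneg _

lemma one_sub_theta_mul_l2_proj_le_of_orth (hx : ∀ i, x i ≠ 0 → i ∈ Jstar)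
    (hx' : ∀ i, x' i ≠ 0 → i ∈ J) (hcard : (Jstar ∪ J).card ≤ s)
    (horth : proj J (T *ᵥ (x - x') + η) = 0) {N : ℝ} (hη : l2 (proj J η) ≤ N) :
    (1 - theta s T) * l2 (proj J (x - x')) ≤ theta s T * l2 (proj Jᶜ x) + N := by
  set d := proj J (x - x')
  set a := proj Jᶜ x
  have hsplit : T *ᵥ (x - x') - (x - x') = (T *ᵥ d - d) + (T *ᵥ a - a) := by
    conv_lhs => rw [← proj_add_proj_compl J (x - x'),
      proj_sub_eq_of_disjoint hx' disjoint_compl_left]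
    rw [mulVec_add]
    abel
  have hd := l2_proj_mulVec_sub_le s T hcard (V := J) (u := d) Finset.subset_union_right
    (fun i hi => Finset.mem_union_right _ (proj_support _ i hi))
  have ha := l2_proj_mulVec_sub_le s T hcard (V := J) (u := a) Finset.subset_union_right
    (fun i hi => Finset.mem_union_left _ (proj_support_of_support hx i hi))
  have : l2 d ≤ theta s T * l2 d + theta s T * l2 a + l2 (proj J η) := by
    have e : d = -proj J (T *ᵥ (x - x') - (x - x')) - proj J η :=
      proj_eq_of_proj_mulVec_add_eq_zero horth
    conv_lhs => rw [e, hsplit, proj_add]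
    refine (l2_sub_le _ _).trans (add_le_add_left ?_ _)
    rw [l2_neg]
    exact (l2_add_le _ _).trans (add_le_add hd ha)
  linarith

end LeastSquares

lemma sum_sdiff_le_sum_sdiff_of_forall_le {α : Type*} [DecidableEq α] {K Q : Finset α}
    {f : α → ℝ} (hf : ∀ i, 0 ≤ f i) (hcard : K.card ≤ Q.card)
    (hle : ∀ i ∈ K \ Q, ∀ j ∈ Q, f i ≤ f j) : ∑ i ∈ K \ Q, f i ≤ ∑ j ∈ Q \ K, f j := by
  rcases (K \ Q).eq_empty_or_nonempty with h | h
  · rw [h, Finset.sum_empty]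
    exact Finset.sum_nonneg fun j _ => hf j
  obtain ⟨i₀, hi₀, hmax⟩ := (K \ Q).exists_max_image f h
  calc ∑ i ∈ K \ Q, f i ≤ (K \ Q).card • f i₀ := Finset.sum_le_card_nsmul _ _ _ hmax
    _ ≤ (Q \ K).card • f i₀ :=
        nsmul_le_nsmul_left (hf i₀) (Finset.card_sdiff_le_card_sdiff_iff.2 hcard)
    _ ≤ ∑ j ∈ Q \ K, f j :=
        Finset.card_nsmul_le_sum _ _ _ fun j hj => hle i₀ hi₀ j (Finset.mem_sdiff.1 hj).1

section Selection

variable {ι : Type*} [Fintype ι] [DecidableEq ι]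

lemma l2_proj_sdiff_le_of_forall_le {K Q : Finset ι} {v : ι → 𝕜} (hcard : K.card ≤ Q.card)
    (hle : ∀ i ∈ K \ Q, ∀ j ∈ Q, ‖v i‖ ≤ ‖v j‖) : l2 (proj (K \ Q) v) ≤ l2 (proj (Q \ K) v) := by
  rw [l2_proj_eq_sqrt, l2_proj_eq_sqrt]
  exact Real.sqrt_le_sqrt (sum_sdiff_le_sum_sdiff_of_forall_le (fun _ => by positivity)
    hcard fun i hi j hj => pow_le_pow_left₀ (norm_nonneg _) (hle i hi j hj) 2)

/-- The entries of `x'` discarded on `U \ Q` weigh at most those on `U \ supp x`, where `x'`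
coincides with `x' - x`. -/
lemma l2_proj_sdiff_le_two_mul {x x' : ι → 𝕜} {Jstar U Q : Finset ι}
    (hx : ∀ i, x i ≠ 0 → i ∈ Jstar) (hQU : Q ⊆ U) (hcard : Jstar.card ≤ Q.card)
    (hsel : ∀ j ∈ Q, ∀ l ∈ U \ Q, ‖x' l‖ ≤ ‖x' j‖) :
    l2 (proj (U \ Q) x) ≤ 2 * l2 (proj U (x - x')) := by
  have hkept : ∑ i ∈ U \ Q, ‖x' i‖ ^ 2 ≤ ∑ i ∈ U \ Jstar, ‖x' i‖ ^ 2 := by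
    have hsel' := sum_sdiff_le_sum_sdiff_of_forall_le (K := Jstar ∩ U) (Q := Q)
      (f := fun i => ‖x' i‖ ^ 2) (fun _ => by positivity)
      ((Finset.card_le_card Finset.inter_subset_left).trans hcard)
      fun i hi j hj => pow_le_pow_left₀ (norm_nonneg _) (hsel j hj i (by
        simp only [Finset.mem_sdiff, Finset.mem_inter] at hi ⊢; exact ⟨hi.1.2, hi.2⟩)) 2
    have e1 : (Jstar ∩ U) \ Q = (U \ Q) ∩ Jstar := by ext; simp; tauto
    have e2 : Q \ (Jstar ∩ U) = (U \ Jstar) ∩ Q := by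
      ext i; simp only [Finset.mem_sdiff, Finset.mem_inter]; have := @hQU i; tauto
    rw [e1, e2] at hsel'
    rw [← Finset.sum_inter_add_sum_sdiff (U \ Q) Jstar, ← Finset.sum_inter_add_sum_sdiff
      (U \ Jstar) Q, sdiff_sdiff_comm]
    linarith
  have hx'_le : l2 (proj (U \ Q) x') ≤ l2 (proj U (x - x')) := by
    calc l2 (proj (U \ Q) x') ≤ l2 (proj (U \ Jstar) x') := by
          rw [l2_proj_eq_sqrt, l2_proj_eq_sqrt]; exact Real.sqrt_le_sqrt hkept
      _ = l2 (proj (U \ Jstar) (x - x')) := by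
          rw [proj_sub, proj_eq_zero hx Finset.sdiff_disjoint, zero_sub, l2_neg]
      _ ≤ l2 (proj U (x - x')) := l2_proj_le_of_subset Finset.sdiff_subset _
  calc l2 (proj (U \ Q) x) = l2 (proj (U \ Q) (x - x') + proj (U \ Q) x') := by
        rw [← proj_add, sub_add_cancel]
    _ ≤ l2 (proj U (x - x')) + l2 (proj U (x - x')) :=
        (l2_add_le _ _).trans (add_le_add (l2_proj_le_of_subset Finset.sdiff_subset _) hx'_le)
    _ = 2 * l2 (proj U (x - x')) := by ring

lemma l2_proj_compl_sq_le_of_prune {x x' : ι → 𝕜} {Jstar U Q : Finset ι}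
    (hx : ∀ i, x i ≠ 0 → i ∈ Jstar) (hQU : Q ⊆ U) (hcard : Jstar.card ≤ Q.card)
    (hsel : ∀ j ∈ Q, ∀ l ∈ U \ Q, ‖x' l‖ ≤ ‖x' j‖) :
    l2 (proj Qᶜ x) ^ 2 ≤ l2 (proj Uᶜ x) ^ 2 + 4 * l2 (proj U (x - x')) ^ 2 := by
  have hQc : Qᶜ = (U \ Q) ∪ Uᶜ := by
    ext i; simp only [Finset.mem_compl, Finset.mem_union, Finset.mem_sdiff]
    have := @hQU i; tauto
  rw [hQc, l2_proj_union_sq (Finset.disjoint_left.2 fun i hi hi' =>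
    Finset.mem_compl.1 hi' (Finset.mem_sdiff.1 hi).1)]
  have := l2_proj_sdiff_le_two_mul hx hQU hcard hsel
  nlinarith [l2_nonneg (proj (U \ Q) x)]

end Selection

lemma add_le_sqrt_two_mul_sqrt (a b : ℝ) : a + b ≤ Real.sqrt 2 * Real.sqrt (a ^ 2 + b ^ 2) := by
  rw [← Real.sqrt_mul zero_le_two]
  exact Real.le_sqrt_of_sq_le (by nlinarith [sq_nonneg (a - b)])

section Identification

variable {ι : Type*} [Fintype ι] [DecidableEq ι]

/-- With `w = T (x - x_t) + η`, which vanishes on `J_t`: the entries of `supp x` missed by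
`J_t ∪ J̄` are outweighed in `w` by those of `J̄ \ (supp x ∪ J_t)`, where `w` reduces to
`(T - 1)(x - x_t) + η`; adding the two halves costs the factor `√2`. -/
lemma l2_proj_compl_le_of_identify {s : ℕ} {T : Matrix ι ι 𝕜} {x xt η : ι → 𝕜}
    {Jstar Jt Jbar : Finset ι} (hx : ∀ i, x i ≠ 0 → i ∈ Jstar) (hxt : ∀ i, xt i ≠ 0 → i ∈ Jt)
    (hcard : (Jstar ∪ (Jt ∪ Jbar)).card ≤ s) (hJbar : Jstar.card ≤ Jbar.card)
    (horth : proj Jt (T *ᵥ (x - xt) + η) = 0)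
    (hsel : ∀ j ∈ Jbar, ∀ l, l ∉ Jbar → ‖(T *ᵥ (x - xt) + η) l‖ ≤ ‖(T *ᵥ (x - xt) + η) j‖)
    {N : ℝ} (hη : l2 (proj (Jstar ∪ Jbar) η) ≤ N) :
    l2 (proj (Jt ∪ Jbar)ᶜ x) ≤ Real.sqrt 2 * (theta s T * l2 (x - xt) + N) := by
  set u := x - xt
  set w := T *ᵥ u + η
  set S := (Jstar \ Jt) \ Jbar
  set S' := Jbar \ (Jstar ∪ Jt)
  have hu : ∀ i, u i ≠ 0 → i ∈ Jstar ∪ Jt := support_sub_subset hx hxt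
  have hw : ∀ i, w i ≠ 0 → i ∈ Jtᶜ := fun i hi => Finset.mem_compl.2 fun hiJ =>
    hi (by simpa [hiJ] using congrFun horth i)
  have hmissed : proj (Jt ∪ Jbar)ᶜ x = proj S u := by
    rw [← proj_sub_eq_of_disjoint hxt (disjoint_compl_left.mono_right Finset.subset_union_left)]
    exact proj_eq_proj_of_support hu fun i hi => by
      simp only [S, Finset.mem_compl, Finset.mem_union, Finset.mem_sdiff] at hi ⊢; tauto
  have hwins : proj (Jbar \ (Jstar \ Jt)) w = proj S' (w - u) := by
    rw [proj_sub_eq_of_disjoint hu Finset.sdiff_disjoint]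
    exact proj_eq_proj_of_support hw fun i hi => by
      simp only [Finset.mem_compl, Finset.mem_union, Finset.mem_sdiff] at hi ⊢; tauto
  have hselS : l2 (proj S w) ≤ l2 (proj S' (w - u)) := by
    rw [← hwins]
    exact l2_proj_sdiff_le_of_forall_le ((Finset.card_le_card Finset.sdiff_subset).trans hJbar)
      fun i hi j hj => hsel j hj i (Finset.mem_sdiff.1 hi).2
  have hdisj : Disjoint S S' := (Finset.sdiff_disjoint.mono_right
    ((Finset.sdiff_subset.trans Finset.sdiff_subset).trans Finset.subset_union_left)).symm
  have hSS' : S ∪ S' ⊆ Jstar ∪ Jbar := by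
    intro i; simp [S, S']; tauto
  have hres : l2 (proj (S ∪ S') (w - u)) ≤ theta s T * l2 u + N := by
    rw [show w - u = (T *ᵥ u - u) + η by simp only [w]; abel, proj_add]
    refine (l2_add_le _ _).trans (add_le_add ?_ ((l2_proj_le_of_subset hSS' η).trans hη))
    exact l2_proj_mulVec_sub_le s T hcard (hSS'.trans (by intro i; simp; tauto))
      fun i hi => by have := hu i hi; simp only [Finset.mem_union] at this ⊢; tauto
  calc l2 (proj (Jt ∪ Jbar)ᶜ x) = l2 (proj S w - proj S (w - u)) := by
        rw [hmissed, ← proj_sub, sub_sub_cancel]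
    _ ≤ l2 (proj S (w - u)) + l2 (proj S' (w - u)) := by
        rw [add_comm]; exact (l2_sub_le _ _).trans (add_le_add hselS le_rfl)
    _ ≤ Real.sqrt 2 * l2 (proj (S ∪ S') (w - u)) := by
        rw [← Real.sqrt_sq (l2_nonneg (proj (S ∪ S') _)), l2_proj_union_sq hdisj]
        exact add_le_sqrt_two_mul_sqrt _ _
    _ ≤ _ := by gcongr

end Identification

section Constants

lemma le_rho₁_mul_add_of_sq_le {θ c E B Z : ℝ} (hθ0 : 0 ≤ θ) (hθ1 : θ < 1) (hB : 0 ≤ B)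
    (hN : 0 ≤ c * Z) (h : E ^ 2 ≤ (θ * E + c * Z) ^ 2 + B ^ 2) :
    E ≤ 1 / Real.sqrt (1 - θ ^ 2) * B + c / (1 - θ) * Z := by
  set N := c * Z
  have h1θ : 0 < 1 - θ := by linarith
  have hs : 0 < Real.sqrt (1 - θ ^ 2) := Real.sqrt_pos.2 (by nlinarith)
  rw [show 1 / Real.sqrt (1 - θ ^ 2) * B + c / (1 - θ) * Z =
      ((1 - θ) * B / Real.sqrt (1 - θ ^ 2) + N) / (1 - θ) by field_simp; ring, le_div_iff₀ h1θ,
    ← sub_le_iff_le_add, le_div_iff₀ hs]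
  rcases le_or_gt ((1 - θ) * E) N with hsmall | hlarge
  · nlinarith [mul_nonneg h1θ.le hB]
  -- `E² - (θE + N)² = ((1-θ)E - N)((1+θ)E + N)` and `(1+θ)((1-θ)E - N) ≤ (1-θ)((1+θ)E + N)`
  have key : ((E * (1 - θ) - N) * Real.sqrt (1 - θ ^ 2)) ^ 2 ≤ ((1 - θ) * B) ^ 2 := by
    rw [mul_pow, Real.sq_sqrt (by nlinarith)]
    nlinarith [mul_le_mul_of_nonneg_left h (sq_nonneg (1 - θ)),
      mul_nonneg (mul_nonneg h1θ.le (sub_nonneg.2 hlarge.le)) hN]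
  exact (pow_le_pow_iff_left₀ (by nlinarith) (by positivity) two_ne_zero).1 key

lemma one_sub_mul_le_of_prune {θ A B D N : ℝ} (hθ1 : θ < 1) (hA : 0 ≤ A)
    (hB : 0 ≤ B) (hD : 0 ≤ D) (hN : 0 ≤ N) (hD' : (1 - θ) * D ≤ θ * A + N)
    (hB' : B ^ 2 ≤ A ^ 2 + 4 * D ^ 2) :
    (1 - θ) * B ≤ Real.sqrt ((1 - θ) ^ 2 + 4 * θ ^ 2) * A + 2 * N := by
  set q := Real.sqrt ((1 - θ) ^ 2 + 4 * θ ^ 2)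
  have hq : q ^ 2 = (1 - θ) ^ 2 + 4 * θ ^ 2 := Real.sq_sqrt (by positivity)
  have h2θq : 2 * θ ≤ q := Real.le_sqrt_of_sq_le (by nlinarith)
  have hD2 : ((1 - θ) * D) ^ 2 ≤ (θ * A + N) ^ 2 :=
    pow_le_pow_left₀ (mul_nonneg (by linarith) hD) hD' 2
  refine (pow_le_pow_iff_left₀ (mul_nonneg (by linarith) hB)
    (by positivity) two_ne_zero).1 ?_
  nlinarith [mul_nonneg (mul_nonneg hA hN) (sub_nonneg.2 h2θq)]

lemma sqrt_le_of_one_sixth_le {θ : ℝ} (hθ0 : 0 ≤ θ) (hθ1 : θ < 1) (h6 : 1 / 6 ≤ θ) :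
    Real.sqrt (2 * ((1 - θ) ^ 2 + 4 * θ ^ 2)) ≤ (1 + θ) / (1 - θ) := by
  refine Real.sqrt_le_iff.2 ⟨by positivity, ?_⟩
  rw [div_pow, le_div_iff₀ (by nlinarith)]
  nlinarith [mul_nonneg (sub_nonneg.2 h6) (sub_nonneg.2 hθ1.le), sq_nonneg (θ - 1 / 6),
    mul_nonneg (mul_nonneg (sub_nonneg.2 h6) (sub_nonneg.2 h6)) (sub_nonneg.2 hθ1.le)]

lemma sqrt_le_of_le_one_sixth {θ : ℝ} (hθ0 : 0 ≤ θ) (h6 : θ ≤ 1 / 6) :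
    Real.sqrt (2 * ((1 - θ) ^ 2 + 4 * θ ^ 2)) ≤ 2 * (1 - θ ^ 2) / (1 + 2 * θ + 2 * θ ^ 2) := by
  refine Real.sqrt_le_iff.2 ⟨div_nonneg (by nlinarith) (by positivity), ?_⟩
  rw [div_pow, le_div_iff₀ (by positivity)]
  nlinarith [mul_nonneg (sub_nonneg.2 h6) hθ0, sq_nonneg (θ - 1 / 6),
    mul_nonneg (mul_nonneg (sub_nonneg.2 h6) (sub_nonneg.2 h6)) hθ0]

lemma sqrt_two_mul_sqrt_mul_le_rho₃ {θ : ℝ} (hθ0 : 0 ≤ θ) (hθ1 : θ < 1) :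
    Real.sqrt 2 * Real.sqrt ((1 - θ) ^ 2 + 4 * θ ^ 2) * θ ≤
      (1 + θ) * max (θ / (1 - θ)) (2 * θ * (1 - θ) / (1 + 2 * θ + 2 * θ ^ 2)) := by
  rw [← Real.sqrt_mul zero_le_two]
  rcases le_or_gt (1 / 6 : ℝ) θ with h6 | h6
  · calc _ ≤ (1 + θ) / (1 - θ) * θ := by gcongr; exact sqrt_le_of_one_sixth_le hθ0 hθ1 h6
      _ = (1 + θ) * (θ / (1 - θ)) := by ring
      _ ≤ _ := by gcongr; exact le_max_left _ _
  · calc _ ≤ 2 * (1 - θ ^ 2) / (1 + 2 * θ + 2 * θ ^ 2) * θ := by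
          gcongr; exact sqrt_le_of_le_one_sixth hθ0 h6.le
      _ = (1 + θ) * (2 * θ * (1 - θ) / (1 + 2 * θ + 2 * θ ^ 2)) := by ring
      _ ≤ _ := by gcongr; exact le_max_right _ _

lemma two_mul_sqrt_le_tau₃ {θ δ δt : ℝ} (hθ0 : 0 ≤ θ) (hθ1 : θ < 1) (hδ : 0 ≤ δ) (hδt : 0 ≤ δt) :
    2 * Real.sqrt (1 + δt) ≤ max (1 / (1 - θ)) (2 * (1 - θ) / (1 + 2 * θ + 2 * θ ^ 2)) *
      (2 * Real.sqrt (1 + δ) * (1 + δt) / (1 - θ)) := by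
  have h1θ : 0 < 1 - θ := by linarith
  have hc : Real.sqrt (1 + δt) ≤ 1 + δt := Real.sqrt_le_iff.2 ⟨by linarith, by nlinarith⟩
  have hd : 1 ≤ Real.sqrt (1 + δ) := Real.one_le_sqrt.2 (by linarith)
  calc 2 * Real.sqrt (1 + δt) ≤ 2 * Real.sqrt (1 + δ) * (1 + δt) := by nlinarith
    _ ≤ 2 * Real.sqrt (1 + δ) * (1 + δt) / (1 - θ) :=
        le_div_self (by positivity) h1θ (by linarith)
    _ ≤ _ := le_mul_of_one_le_left (by positivity)
        ((one_le_div h1θ).2 (by linarith) |>.trans (le_max_left _ _))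

lemma le_rho₂_mul_rho₃_mul_add {θ δ δt A B D U Z ρ₂ τ₂ ρ₃ τ₃ : ℝ} (hθ0 : 0 ≤ θ) (hθ1 : θ < 1)
    (hδ : 0 ≤ δ) (hδt : 0 ≤ δt) (hA : 0 ≤ A) (hB : 0 ≤ B) (hD : 0 ≤ D) (hU : 0 ≤ U)
    (hZ : 0 ≤ Z) (hD' : (1 - θ) * D ≤ θ * A + Real.sqrt (1 + δt) * Z)
    (hB' : B ^ 2 ≤ A ^ 2 + 4 * D ^ 2) (hA' : A ≤ Real.sqrt 2 * (θ * U + Real.sqrt (1 + δt) * Z))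
    (hρ₂ : ρ₂ = (1 + θ) / (1 - θ)) (hτ₂ : τ₂ = 2 * Real.sqrt (1 + δt) / (1 - θ))
    (hρ₃ : ρ₃ = max (θ / (1 - θ)) (2 * θ * (1 - θ) / (1 + 2 * θ + 2 * θ ^ 2)))
    (hτ₃ : τ₃ = max (1 / (1 - θ)) (2 * (1 - θ) / (1 + 2 * θ + 2 * θ ^ 2)) *
      (2 * Real.sqrt (1 + δ) * (1 + δt) / (1 - θ))) :
    B ≤ ρ₂ * ρ₃ * U + (τ₂ + ρ₂ * τ₃) * Z := by
  set c := Real.sqrt (1 + δt)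
  set q := Real.sqrt ((1 - θ) ^ 2 + 4 * θ ^ 2)
  have h1θ : 0 < 1 - θ := by linarith
  have hcZ : 0 ≤ c * Z := mul_nonneg (Real.sqrt_nonneg _) hZ
  have hq : Real.sqrt 2 * q ≤ 2 * (1 + θ) := by
    have h2 : Real.sqrt 2 ≤ 2 := Real.sqrt_le_iff.2 ⟨zero_le_two, by norm_num⟩
    have hq1 : q ≤ 1 + θ := Real.sqrt_le_iff.2 ⟨by linarith, by nlinarith⟩
    nlinarith [Real.sqrt_nonneg ((1 - θ) ^ 2 + 4 * θ ^ 2)]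
  have hρ := hρ₃ ▸ sqrt_two_mul_sqrt_mul_le_rho₃ hθ0 hθ1
  have hτ : 2 * c ≤ τ₃ := hτ₃ ▸ two_mul_sqrt_le_tau₃ hθ0 hθ1 hδ hδt
  have key : (1 - θ) * B ≤ (1 + θ) * ρ₃ * U + ((1 + θ) * τ₃ + 2 * c) * Z :=
    calc (1 - θ) * B ≤ q * A + 2 * (c * Z) := one_sub_mul_le_of_prune hθ1 hA hB hD hcZ hD' hB'
      _ ≤ q * (Real.sqrt 2 * (θ * U + c * Z)) + 2 * (c * Z) := by gcongr
      _ = Real.sqrt 2 * q * θ * U + Real.sqrt 2 * q * (c * Z) + 2 * (c * Z) := by ring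
      _ ≤ (1 + θ) * ρ₃ * U + 2 * (1 + θ) * (c * Z) + 2 * (c * Z) := by gcongr
      _ ≤ _ := by
        nlinarith [mul_le_mul_of_nonneg_right hτ (mul_nonneg (by linarith : 0 ≤ 1 + θ) hZ)]
  rw [hρ₂, hτ₂, show (1 + θ) / (1 - θ) * ρ₃ * U + (2 * c / (1 - θ) + (1 + θ) / (1 - θ) * τ₃) * Z
    = ((1 + θ) * ρ₃ * U + ((1 + θ) * τ₃ + 2 * c) * Z) / (1 - θ) by field_simp; ring,
    le_div_iff₀ h1θ]
  linarith

lemma mul_lt_one_of_sq_lt {θ a : ℝ} (hθ0 : 0 ≤ θ) (hθ1 : θ < 1)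
    (h : ((1 + θ) * a) ^ 2 < (1 - θ ^ 2) * (1 - θ) ^ 2) :
    1 / Real.sqrt (1 - θ ^ 2) * ((1 + θ) / (1 - θ)) * a < 1 := by
  have h1θ : 0 < 1 - θ := by linarith
  have hs : 0 < Real.sqrt (1 - θ ^ 2) := Real.sqrt_pos.2 (by nlinarith)
  rw [show 1 / Real.sqrt (1 - θ ^ 2) * ((1 + θ) / (1 - θ)) * a =
      (1 + θ) * a / (Real.sqrt (1 - θ ^ 2) * (1 - θ)) by field_simp, div_lt_one (by positivity)]
  refine lt_of_pow_lt_pow_left₀ 2 (by positivity) ?_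
  rwa [mul_pow (Real.sqrt _), Real.sq_sqrt (by nlinarith)]

lemma rho_lt_one {θ : ℝ} (hθ0 : 0 ≤ θ) (hθ : θ < 0.325) :
    (1 / Real.sqrt (1 - θ ^ 2)) * ((1 + θ) / (1 - θ)) *
      max (θ / (1 - θ)) (2 * θ * (1 - θ) / (1 + 2 * θ + 2 * θ ^ 2)) < 1 := by
  have hθ' : θ < 13 / 40 := by norm_num at hθ ⊢; linarith
  have h1θ : 0 < 1 - θ := by linarith
  rw [mul_max_of_nonneg _ _ (by positivity)]
  refine max_lt (mul_lt_one_of_sq_lt hθ0 (by linarith) ?_)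
    (mul_lt_one_of_sq_lt hθ0 (by linarith) ?_)
  · rw [mul_div_assoc', div_pow, div_lt_iff₀ (by positivity)]
    nlinarith [mul_nonneg hθ0 hθ0, mul_nonneg (mul_nonneg hθ0 hθ0) hθ0,
      sq_nonneg (13 / 40 - θ), mul_nonneg (sub_nonneg.2 hθ'.le) hθ0,
      mul_nonneg (mul_nonneg (sub_nonneg.2 hθ'.le) hθ0) hθ0,
      mul_nonneg (mul_nonneg (mul_nonneg (sub_nonneg.2 hθ'.le) hθ0) hθ0) hθ0,
      mul_nonneg (mul_nonneg (sub_nonneg.2 hθ'.le) (sub_nonneg.2 hθ'.le)) hθ0,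
      pow_nonneg (sub_nonneg.2 hθ'.le) 3, pow_nonneg (sub_nonneg.2 hθ'.le) 4,
      pow_nonneg (sub_nonneg.2 hθ'.le) 5]
  · rw [mul_div_assoc', div_pow, div_lt_iff₀ (by positivity)]
    nlinarith [mul_nonneg hθ0 hθ0, sq_nonneg (1 - θ), mul_nonneg (sub_nonneg.2 hθ'.le) hθ0,
      pow_nonneg hθ0 3, pow_nonneg hθ0 4]

end Constants

/-- linear convergence of one full iteration of Oblique Subspace Pursuit. -/
theorem statement13 (m n s : ℕ) (Ψ Ψt : Matrix (Fin m) (Fin n) 𝕜)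
    (xstar : Fin n → 𝕜) (Jstar : Finset (Fin n))
    (hsupp : ∀ i, xstar i ≠ 0 ↔ i ∈ Jstar) (hcard : Jstar.card ≤ s)
    (z y : Fin m → 𝕜) (hy : y = Ψ.mulVec xstar + z)
    (θ δ δt : ℝ) (hθdef : θ = theta (3 * s) (Ψtᴴ * Ψ)) (hθ : θ < 1)
    (hδdef : δ = ric s Ψ) (hδtdef : δt = ric (2 * s) Ψt)
    (Jt : Finset (Fin n)) (hJt : Jt.card = s)
    (xt : Fin n → 𝕜) (hxtsupp : ∀ i, xt i ≠ 0 → i ∈ Jt)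
    (hxtorth : ∀ j ∈ Jt, star (col Ψt j) ⬝ᵥ (y - Ψ.mulVec xt) = 0)
    (w : Fin n → 𝕜) (hw : w = Ψtᴴ.mulVec (y - Ψ.mulVec xt))
    (Jbar : Finset (Fin n)) (hJbar : Jbar.card = s)
    (hJbarsel : ∀ j ∈ Jbar, ∀ l, l ∉ Jbar → ‖w l‖ ≤ ‖w j‖)
    (Jtil : Finset (Fin n)) (hJtildef : Jtil = Jt ∪ Jbar)
    (xtil : Fin n → 𝕜) (hxtilsupp : ∀ i, xtil i ≠ 0 → i ∈ Jtil)
    (hxtilorth : ∀ j ∈ Jtil, star (col Ψt j) ⬝ᵥ (y - Ψ.mulVec xtil) = 0)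
    (Jnext : Finset (Fin n)) (hJnextsub : Jnext ⊆ Jtil) (hJnext : Jnext.card = s)
    (hJnextsel : ∀ j ∈ Jnext, ∀ l ∈ Jtil \ Jnext, ‖xtil l‖ ≤ ‖xtil j‖)
    (xnext : Fin n → 𝕜) (hxnsupp : ∀ i, xnext i ≠ 0 → i ∈ Jnext)
    (hxnorth : ∀ j ∈ Jnext, star (col Ψt j) ⬝ᵥ (y - Ψ.mulVec xnext) = 0)
    (ρ₁ τ₁ ρ₂ τ₂ ρ₃ τ₃ ρ τ : ℝ)
    (hρ₁ : ρ₁ = 1 / Real.sqrt (1 - θ ^ 2))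
    (hτ₁ : τ₁ = Real.sqrt (1 + δt) / (1 - θ))
    (hρ₂ : ρ₂ = (1 + θ) / (1 - θ))
    (hτ₂ : τ₂ = 2 * Real.sqrt (1 + δt) / (1 - θ))
    (hρ₃ : ρ₃ = max (θ / (1 - θ)) (2 * θ * (1 - θ) / (1 + 2 * θ + 2 * θ ^ 2)))
    (hτ₃ : τ₃ = max (1 / (1 - θ)) (2 * (1 - θ) / (1 + 2 * θ + 2 * θ ^ 2)) *
      (2 * Real.sqrt (1 + δ) * (1 + δt) / (1 - θ)))
    (hρ : ρ = ρ₁ * ρ₂ * ρ₃) (hτ : τ = τ₁ + ρ₁ * τ₂ + ρ₁ * ρ₂ * τ₃) :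
    l2 (xnext - xstar) ≤ ρ * l2 (xt - xstar) + τ * l2 z ∧
      (θ < 0.325 → ρ < 1) := by
  classical
  subst hy hJtildef
  rw [conjTranspose_mulVec_residual] at hw
  subst hw
  have hθ0 : 0 ≤ θ := hθdef ▸ theta_nonneg _ _
  have hx : ∀ i, xstar i ≠ 0 → i ∈ Jstar := fun i => (hsupp i).1
  have hnoise : ∀ V : Finset (Fin n), V.card ≤ 2 * s →
      l2 (proj V (Ψtᴴ *ᵥ z)) ≤ Real.sqrt (1 + δt) * l2 z :=
    fun V hV => hδtdef ▸ l2_proj_conjTranspose_mulVec_le _ Ψt hV z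
  have c₁ := Finset.card_union_le Jstar Jnext
  have c₂ := Finset.card_union_le Jt Jbar
  have c₃ := Finset.card_union_le Jstar (Jt ∪ Jbar)
  have c₄ := Finset.card_union_le Jstar Jbar
  have hfinal := l2_sub_sq_le_of_orth (s := 3 * s) hx hxnsupp (by omega)
    (proj_mulVec_residual_eq_zero hxnorth) (hnoise Jnext (by omega))
  have hstep := one_sub_theta_mul_l2_proj_le_of_orth (s := 3 * s) hx hxtilsupp (by omega)
    (proj_mulVec_residual_eq_zero hxtilorth) (hnoise _ (by omega))
  have hprune := l2_proj_compl_sq_le_of_prune hx hJnextsub (by omega) hJnextsel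
  have hident := l2_proj_compl_le_of_identify (s := 3 * s) hx hxtsupp (by omega) (by omega)
    (proj_mulVec_residual_eq_zero hxtorth) hJbarsel (hnoise _ (by omega))
  rw [← hθdef] at hfinal hstep hident
  refine ⟨?_, fun hθ' => hρ ▸ hρ₁ ▸ hρ₂ ▸ hρ₃ ▸ rho_lt_one hθ0 hθ'⟩
  rw [l2_sub_comm xnext, l2_sub_comm xt]
  have hcompl := le_rho₂_mul_rho₃_mul_add hθ0 hθ (hδdef ▸ ric_nonneg _ _)
    (hδtdef ▸ ric_nonneg _ _) (l2_nonneg _) (l2_nonneg _) (l2_nonneg _) (l2_nonneg _)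
    (l2_nonneg _) hstep hprune hident hρ₂ hτ₂ hρ₃ hτ₃
  calc l2 (xstar - xnext) ≤ ρ₁ * l2 (proj Jnextᶜ xstar) + τ₁ * l2 z := hρ₁ ▸ hτ₁ ▸
        le_rho₁_mul_add_of_sq_le hθ0 hθ (l2_nonneg _)
          (mul_nonneg (Real.sqrt_nonneg _) (l2_nonneg z)) hfinal
    _ ≤ ρ₁ * (ρ₂ * ρ₃ * l2 (xstar - xt) + (τ₂ + ρ₂ * τ₃) * l2 z) + τ₁ * l2 z := by
        gcongr
        exact hρ₁ ▸ by positivity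
    _ = ρ * l2 (xstar - xt) + τ * l2 z := by rw [hρ, hτ]; ring

end ObliquePursuit
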